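/- Let 𝔳 be a pure nontrivial finitely generated weakly linked net of finite-dimensional k-vector spaces over a ℤⁿ-quiver Q. Let W ∈ LP(𝔳) be generated by a vertex v. Then φ^u_v(W_u) = 0 for every vertex u distinct from v. In particular, for distinct vertices u and v, no element of LP(𝔳) is generated both by u and by v, i.e. LP(𝔳)*_u ∩ LP(𝔳)*_v = ∅. -/
import Mathlib


/- Background definitions: ℤⁿ-quivers, linked nets, and associated notions,
following Esteves–Santos–Vital, "Quiver representations arising from
degenerations of linear series, II". -/

open CategoryTheory CategoryTheory.Limits

namespace LNet
universe w

section QuiverDefs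

variable {V : Type*} [Quiver.{w+1} V] {n : ℕ}

/-- The number of arrows of type `t` occurring in the path `p`. -/
def typeCount (τ : ∀ {a b : V}, (a ⟶ b) → Fin (n + 1)) :
    ∀ {a b : V}, Quiver.Path a b → Fin (n + 1) → ℕ
  | _, _, Quiver.Path.nil, _ => 0
  | _, _, Quiver.Path.cons p e, t => typeCount τ p t + (if τ e = t then 1 else 0)

variable (τ : ∀ {a b : V}, (a ⟶ b) → Fin (n + 1))

/-- A path is admissible if it contains no arrow of at least one arrow type. -/
def Admissible {a b : V} (p : Quiver.Path a b) : Prop :=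
  ∃ t : Fin (n + 1), typeCount τ p t = 0

/-- A path is simple if it contains at most one arrow of each type. -/
def SimplePath {a b : V} (p : Quiver.Path a b) : Prop :=
  ∀ t : Fin (n + 1), typeCount τ p t ≤ 1

/-- Two paths with the same source have no arrow type in common. -/
def NoCommonType {a b c : V} (p : Quiver.Path a b) (q : Quiver.Path a c) : Prop :=
  ∀ t : Fin (n + 1), ¬(typeCount τ p t ≠ 0 ∧ typeCount τ q t ≠ 0)

/-- The quiver is a `ℤⁿ`-quiver with respect to the partition of its arrow set
into the `n + 1` types given by `τ`. -/
structure IsZnQuiver : Prop where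
  uniqArrow : ∀ (a : V) (t : Fin (n + 1)), ∃! e : Σ b : V, a ⟶ b, τ e.2 = t
  connAdm : ∀ a b : V, ∃ p : Quiver.Path a b, Admissible τ p
  targetEq : ∀ {a b c : V} (p : Quiver.Path a b) (q : Quiver.Path a c),
      b = c ↔ ∃ d : ℤ, ∀ t : Fin (n + 1),
        (typeCount τ p t : ℤ) - (typeCount τ q t : ℤ) = d

/-- `b = I · a`: there is a simple path from `a` to `b` with essential type `I`. -/
def StepBy (I : Set (Fin (n + 1))) (a b : V) : Prop :=
  ∃ p : Quiver.Path a b, SimplePath τ p ∧ ∀ t : Fin (n + 1), typeCount τ p t ≠ 0 ↔ t ∈ I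

/-- Two distinct vertices connected by a simple path are neighbors. -/
def Neighbors (a b : V) : Prop :=
  a ≠ b ∧ ((∃ p : Quiver.Path a b, SimplePath τ p) ∨ (∃ p : Quiver.Path b a, SimplePath τ p))

/-- A polygon is a nonempty finite set of pairwise neighboring vertices. -/
def IsPolygon (Δ : Finset V) : Prop :=
  Δ.Nonempty ∧ ∀ u ∈ Δ, ∀ v ∈ Δ, u ≠ v → Neighbors τ u v

/-- The hull of a set of vertices. -/
def hull (H : Set V) : Set V :=
  {v | ∀ t : Fin (n + 1), ∃ z ∈ H, ∃ p : Quiver.Path z v, typeCount τ p t = 0}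

/-- `w` is the shadow of `v` in `H`: `w ∈ H` and each `z ∈ H` is connected to `v`
by an admissible path through `w`. -/
def IsShadow (H : Set V) (v w : V) : Prop :=
  w ∈ H ∧ ∀ z ∈ H, ∃ (p : Quiver.Path z w) (q : Quiver.Path w v), Admissible τ (p.comp q)

/-- `v` is a bridge of `v₁` and `v₂`: there are simple admissible paths from `v`
to `v₁` and to `v₂` with no arrow type in common. -/
def IsBridge (v₁ v₂ v : V) : Prop :=
  ∃ (γ₁ : Quiver.Path v v₁) (γ₂ : Quiver.Path v v₂),
    SimplePath τ γ₁ ∧ Admissible τ γ₁ ∧ SimplePath τ γ₂ ∧ Admissible τ γ₂ ∧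
      NoCommonType τ γ₁ γ₂

/-- Two distinct vertices are weakly neighbors if they admit a bridge. -/
def WeaklyNeighbors (v₁ v₂ : V) : Prop :=
  v₁ ≠ v₂ ∧ ∃ v : V, IsBridge τ v₁ v₂ v

/-- Composition of a chain of paths. -/
def chainComp (v : ℕ → V) (α : ∀ i : ℕ, Quiver.Path (v i) (v (i + 1))) :
    ∀ m : ℕ, Quiver.Path (v 0) (v m)
  | 0 => Quiver.Path.nil
  | (m + 1) => (chainComp v α m).comp (α m)

end QuiverDefs

section AbelianDefs

variable {k : Type*} [Field k]
variable {V : Type*} [Quiver.{w+1} V] {n : ℕ}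
variable {C : Type*} [Category C] [Abelian C] [Linear k C]

/-- The composition of the morphisms of `F` along a path. -/
def mapAlong (F : Prefunctor V C) : ∀ {a b : V}, Quiver.Path a b → (F.obj a ⟶ F.obj b)
  | _, _, Quiver.Path.nil => 𝟙 _
  | _, _, Quiver.Path.cons p e => mapAlong F p ≫ F.map e

variable (k) (τ : ∀ {a b : V}, (a ⟶ b) → Fin (n + 1))

/-- A weakly linked net: maps along two paths with the same endpoints, the second
admissible, agree up to a scalar, and maps along minimal circuits vanish. -/
structure IsWeaklyLinkedNet (F : Prefunctor V C) : Prop where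
  scalar : ∀ {a b : V} (γ₁ γ₂ : Quiver.Path a b), Admissible τ γ₂ →
    ∃ c : k, mapAlong F γ₁ = c • mapAlong F γ₂
  circuit : ∀ {a b : V} (γ : Quiver.Path a b), SimplePath τ γ → ¬ Admissible τ γ →
    mapAlong F γ = 0

/-- A linked net: a weakly linked net such that two admissible paths leaving the
same vertex with no arrow type in common have trivially intersecting kernels. -/
def IsLinkedNet (F : Prefunctor V C) : Prop :=
  IsWeaklyLinkedNet k τ F ∧
    ∀ {a b c : V} (γ₁ : Quiver.Path a b) (γ₂ : Quiver.Path a c),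
      Admissible τ γ₁ → Admissible τ γ₂ → NoCommonType τ γ₁ γ₂ →
      ∀ {T : C} (h : T ⟶ F.obj a),
        h ≫ mapAlong F γ₁ = 0 → h ≫ mapAlong F γ₂ = 0 → h = 0

variable {k}

/-- The class `φ^u_v` is zero. -/
def PhiZero (F : Prefunctor V C) (u v : V) : Prop :=
  ∀ p : Quiver.Path u v, Admissible τ p → mapAlong F p = 0

/-- Two vertices are unrelated for the net if the classes `φ^u_v` and `φ^v_u` vanish. -/
def Unrelated (F : Prefunctor V C) (u v : V) : Prop :=
  PhiZero τ F u v ∧ PhiZero τ F v u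

/-- The net is 1-generated by `H`. -/
def OneGenBy (F : Prefunctor V C) (H : Set V) : Prop :=
  ∀ v : V, ∃ u ∈ H, ∃ p : Quiver.Path u v, Epi (mapAlong F p)

/-- The net is generated by `H`. -/
def GeneratedBy (F : Prefunctor V C) (H : Set V) : Prop :=
  ∀ v : V, ∃ s : Finset ((u : V) × Quiver.Path u v),
    (∀ x ∈ s, x.1 ∈ H) ∧ s.sup (fun x => imageSubobject (mapAlong F x.2)) = ⊤

/-- The net is finitely generated. -/
def FinitelyGenerated (F : Prefunctor V C) : Prop :=
  ∃ H : Set V, H.Finite ∧ GeneratedBy F H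

/-- All objects of the net are simple objects. -/
def AllSimple (F : Prefunctor V C) : Prop := ∀ v : V, Simple (F.obj v)

/-- The net is locally finite. -/
def LocallyFinite (F : Prefunctor V C) : Prop :=
  ∀ v : V, ∃ ℓ : ℕ, ∀ (u : V) (p : Quiver.Path u v), ℓ < p.length → mapAlong F p = 0

/-- The net is pure: every epimorphism between associated objects is an isomorphism. -/
def PureRep (F : Prefunctor V C) : Prop :=
  ∀ (u v : V) (f : F.obj u ⟶ F.obj v), Epi f → IsIso f

/-- The net is exact: `Im φ^{v₁}_{v₂} = Ker φ^{v₂}_{v₁}` for all neighbors. -/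
def ExactRep (F : Prefunctor V C) : Prop :=
  ∀ u v : V, Neighbors τ u v → ∀ (p : Quiver.Path u v) (q : Quiver.Path v u),
    Admissible τ p → Admissible τ q →
      imageSubobject (mapAlong F p) = kernelSubobject (mapAlong F q)

/-- The representation `𝔳_H` assembled from a shadow function `sh` and maps `Gmap`. -/
def shadowPrefunctor (F : Prefunctor V C) (sh : V → V)
    (Gmap : ∀ {a b : V}, (a ⟶ b) → (F.obj (sh a) ⟶ F.obj (sh b))) : Prefunctor V C where
  obj v := F.obj (sh v)
  map e := Gmap e

variable (k)

/-- `(sh, Gmap)` is the data of an `H`-shadow representation of `F`. -/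
def IsShadowRep (H : Set V) (F : Prefunctor V C) (sh : V → V)
    (Gmap : ∀ {a b : V}, (a ⟶ b) → (F.obj (sh a) ⟶ F.obj (sh b))) : Prop :=
  (∀ v : V, IsShadow τ H v (sh v)) ∧
    ∀ {a b : V} (e : a ⟶ b),
      ((¬ ∃ (p : Quiver.Path (sh a) a) (q : Quiver.Path a b), Admissible τ (p.comp q)) →
        Gmap e = 0) ∧
      ((∃ (p : Quiver.Path (sh a) a) (q : Quiver.Path a b), Admissible τ (p.comp q)) →
        ∃ (c : k) (ρ : Quiver.Path (sh a) (sh b)), c ≠ 0 ∧ Admissible τ ρ ∧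
          Gmap e = c • mapAlong F ρ)

end AbelianDefs

section VectorDefs

variable {k : Type*} [Field k]
variable {V : Type*} [Quiver.{w+1} V] {n : ℕ}
variable {W : V → Type*} [∀ v, AddCommGroup (W v)] [∀ v, Module k (W v)]

/-- The composition of the linear maps of the representation along a path. -/
def mapAlongL (φ : ∀ {a b : V}, (a ⟶ b) → (W a →ₗ[k] W b)) :
    ∀ {a b : V}, Quiver.Path a b → (W a →ₗ[k] W b)
  | _, _, Quiver.Path.nil => LinearMap.id
  | _, _, Quiver.Path.cons p e => (φ e).comp (mapAlongL φ p)

variable (k) (τ : ∀ {a b : V}, (a ⟶ b) → Fin (n + 1))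
variable (φ : ∀ {a b : V}, (a ⟶ b) → (W a →ₗ[k] W b))

/-- A weakly linked net of vector spaces. -/
structure IsWeaklyLinkedNetL : Prop where
  scalar : ∀ {a b : V} (γ₁ γ₂ : Quiver.Path a b), Admissible τ γ₂ →
    ∃ c : k, mapAlongL φ γ₁ = c • mapAlongL φ γ₂
  circuit : ∀ {a b : V} (γ : Quiver.Path a b), SimplePath τ γ → ¬ Admissible τ γ →
    mapAlongL φ γ = 0

/-- A linked net of vector spaces. -/
def IsLinkedNetL : Prop :=
  IsWeaklyLinkedNetL k τ φ ∧
    ∀ {a b c : V} (γ₁ : Quiver.Path a b) (γ₂ : Quiver.Path a c),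
      Admissible τ γ₁ → Admissible τ γ₂ → NoCommonType τ γ₁ γ₂ →
      LinearMap.ker (mapAlongL φ γ₁) ⊓ LinearMap.ker (mapAlongL φ γ₂) = ⊥

/-- All spaces are nonzero of the same finite dimension. -/
def PureNontrivialL : Prop :=
  (∀ v : V, 0 < Module.finrank k (W v)) ∧
    ∀ u v : V, Module.finrank k (W u) = Module.finrank k (W v)

/-- The net of vector spaces is 1-generated by `H`. -/
def OneGenL (H : Set V) : Prop :=
  ∀ v : V, ∃ u ∈ H, ∃ p : Quiver.Path u v, Function.Surjective (mapAlongL φ p)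

/-- The net of vector spaces is generated by `H`. -/
def GeneratedL (H : Set V) : Prop :=
  ∀ v : V, ∃ s : Finset ((u : V) × Quiver.Path u v),
    (∀ x ∈ s, x.1 ∈ H) ∧ (⨆ x ∈ s, LinearMap.range (mapAlongL φ x.2)) = ⊤

/-- The net of vector spaces is finitely generated. -/
def FinGenL : Prop := ∃ H : Set V, H.Finite ∧ GeneratedL k φ H

/-- A subrepresentation of pure dimension one: a point of `LP(𝔳)`. -/
def IsLP (L : ∀ v : V, Submodule k (W v)) : Prop :=
  (∀ v : V, Module.finrank k (L v) = 1) ∧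
    ∀ (a b : V) (e : a ⟶ b), (L a).map (φ e) ≤ L b

/-- A point of `LP_H(𝔳)`: a tuple of one-dimensional subspaces indexed by `H` such
that the image of the subspace at `v` along any admissible path from `v` to `u`
is contained in the subspace at `u`, for all `v, u ∈ H`. -/
def IsLPH (H : Set V) (M : (v : V) → v ∈ H → Submodule k (W v)) : Prop :=
  (∀ (v : V) (hv : v ∈ H), Module.finrank k (M v hv) = 1) ∧
    ∀ (v : V) (hv : v ∈ H) (u : V) (hu : u ∈ H) (p : Quiver.Path v u),
      Admissible τ p → (M v hv).map (mapAlongL φ p) ≤ M u hu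

/-- The family `L` is generated by the vertex `v₀`. -/
def GenByVertexL (v₀ : V) (L : ∀ v : V, Submodule k (W v)) : Prop :=
  ∀ u : V, L u = ⨆ p : Quiver.Path v₀ u, (L v₀).map (mapAlongL φ p)

/-- The net of vector spaces is exact. -/
def ExactL : Prop :=
  ∀ u v : V, Neighbors τ u v → ∀ (p : Quiver.Path u v) (q : Quiver.Path v u),
    Admissible τ p → Admissible τ q →
      LinearMap.range (mapAlongL φ p) = LinearMap.ker (mapAlongL φ q)

end VectorDefs

section Aux

variable {V : Type*} [Quiver.{w+1} V] {n : ℕ}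

theorem typeCount_nil (τ : ∀ {a b : V}, (a ⟶ b) → Fin (n + 1)) {a : V} (t : Fin (n + 1)) :
    typeCount τ (Quiver.Path.nil : Quiver.Path a a) t = 0 := by simp [typeCount]

theorem typeCount_cons (τ : ∀ {a b : V}, (a ⟶ b) → Fin (n + 1)) {a b c : V}
    (p : Quiver.Path a b) (e : b ⟶ c) (t : Fin (n + 1)) :
    typeCount τ (p.cons e) t = typeCount τ p t + (if τ e = t then 1 else 0) := by
  simp [typeCount]

theorem typeCount_toPath (τ : ∀ {a b : V}, (a ⟶ b) → Fin (n + 1)) {a b : V}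
    (e : a ⟶ b) (t : Fin (n + 1)) :
    typeCount τ (e.toPath) t = if τ e = t then 1 else 0 := by
  simp [Quiver.Hom.toPath, typeCount]

theorem typeCount_comp (τ : ∀ {a b : V}, (a ⟶ b) → Fin (n + 1)) {a b c : V}
    (p : Quiver.Path a b) (q : Quiver.Path b c) (t : Fin (n + 1)) :
    typeCount τ (p.comp q) t = typeCount τ p t + typeCount τ q t := by
  induction q with
  | nil => simp [typeCount]
  | cons q e ih => simp [Quiver.Path.comp_cons, typeCount, ih]; ring

variable {k : Type*} [Field k]
variable {W : V → Type*} [∀ v, AddCommGroup (W v)] [∀ v, Module k (W v)]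

theorem mapAlongL_cons (φ : ∀ {a b : V}, (a ⟶ b) → (W a →ₗ[k] W b)) {a b c : V}
    (p : Quiver.Path a b) (e : b ⟶ c) :
    mapAlongL φ (p.cons e) = (φ e).comp (mapAlongL φ p) := by simp [mapAlongL]

theorem mapAlongL_comp (φ : ∀ {a b : V}, (a ⟶ b) → (W a →ₗ[k] W b)) {a b c : V}
    (p : Quiver.Path a b) (q : Quiver.Path b c) :
    mapAlongL φ (p.comp q) = (mapAlongL φ q).comp (mapAlongL φ p) := by
  induction q with
  | nil => rw [Quiver.Path.comp_nil]; simp [mapAlongL]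
  | cons q e ih => simp [Quiver.Path.comp_cons, mapAlongL, ih, LinearMap.comp_assoc]

/-- Pick a path from `x` whose arrows have the types listed in `l`, in order. -/
noncomputable def pickPath (τ : ∀ {a b : V}, (a ⟶ b) → Fin (n + 1))
    (h : ∀ (a : V) (t : Fin (n + 1)), ∃ e : Σ b : V, a ⟶ b, τ e.2 = t) :
    (x : V) → List (Fin (n + 1)) → Σ y : V, Quiver.Path x y
  | x, [] => ⟨x, Quiver.Path.nil⟩
  | x, t :: l =>
      ⟨(pickPath τ h (h x t).choose.1 l).1,
        ((h x t).choose.2.toPath).comp (pickPath τ h (h x t).choose.1 l).2⟩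

theorem typeCount_pickPath (τ : ∀ {a b : V}, (a ⟶ b) → Fin (n + 1))
    (h : ∀ (a : V) (t : Fin (n + 1)), ∃ e : Σ b : V, a ⟶ b, τ e.2 = t)
    (x : V) (l : List (Fin (n + 1))) (t : Fin (n + 1)) :
    typeCount τ (pickPath τ h x l).2 t = l.count t := by
  induction l generalizing x with
  | nil => simp [pickPath, typeCount]
  | cons s l ih =>
      have hτ := (h x s).choose_spec
      rw [pickPath, typeCount_comp, typeCount_toPath, ih, hτ, List.count_cons]
      rcases eq_or_ne s t with hst | hst
      · rw [if_pos hst, if_pos (by exact beq_iff_eq.mpr hst)]; ring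
      · rw [if_neg hst, if_neg (by simpa using hst)]; ring

/-- Key lemma: in a weakly linked net over a ℤⁿ-quiver, the map along any
positive-length loop vanishes. -/
theorem loop_map_zero (τ : ∀ {a b : V}, (a ⟶ b) → Fin (n + 1)) (hZ : IsZnQuiver τ)
    (φ : ∀ {a b : V}, (a ⟶ b) → (W a →ₗ[k] W b)) (hW : IsWeaklyLinkedNetL k τ φ)
    {v : V} (γ : Quiver.Path v v) (hγ : γ.length ≠ 0) : mapAlongL φ γ = 0 := by
  cases γ with
  | nil => simp at hγ
  | @cons w _ β e =>
    have hEx : ∀ (a : V) (t : Fin (n + 1)), ∃ e : Σ b : V, a ⟶ b, τ e.2 = t :=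
      fun a t => (hZ.uniqArrow a t).exists
    -- a simple path from v with one arrow of each type other than τ e
    obtain ⟨z, ρ, hcount⟩ :
        ∃ (z : V) (ρ : Quiver.Path v z), ∀ t, typeCount τ ρ t = if t = τ e then 0 else 1 := by
      refine ⟨_, (pickPath τ hEx v ((List.finRange (n + 1)).erase (τ e))).2, fun t => ?_⟩
      rw [typeCount_pickPath]
      have hone : ∀ s : Fin (n + 1), (List.finRange (n + 1)).count s = 1 := fun s =>
        List.count_eq_one_of_mem (List.nodup_finRange _) (List.mem_finRange s)
      rcases eq_or_ne t (τ e) with h | h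
      · rw [if_pos h, h, List.count_erase_self, hone]
      · rw [if_neg h, List.count_erase_of_ne h, hone]
    have hδ : ∀ t, typeCount τ (e.toPath.comp ρ) t = 1 := by
      intro t
      rw [typeCount_comp, typeCount_toPath, hcount]
      rcases eq_or_ne t (τ e) with h | h
      · rw [if_pos h, if_pos h.symm]
      · rw [if_neg h, if_neg (fun he => h he.symm)]
    have hz : z = w := by
      refine (hZ.targetEq (e.toPath.comp ρ) Quiver.Path.nil).mpr ⟨1, fun t => ?_⟩
      rw [hδ t, typeCount_nil]
      norm_num
    subst hz
    have hadm : Admissible τ ρ := ⟨τ e, by rw [hcount, if_pos rfl]⟩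
    obtain ⟨c, hc⟩ := hW.scalar β ρ hadm
    have hcirc : mapAlongL φ (ρ.cons e) = 0 := by
      apply hW.circuit
      · intro t
        rw [typeCount_cons, hcount]
        rcases eq_or_ne t (τ e) with h | h
        · rw [if_pos h, if_pos h.symm]
        · rw [if_neg h, if_neg (fun he => h he.symm)]
      · rintro ⟨t, ht⟩
        rw [typeCount_cons, hcount] at ht
        rcases eq_or_ne t (τ e) with h | h
        · rw [if_pos h, if_pos h.symm] at ht; omega
        · rw [if_neg h, if_neg (fun he => h he.symm)] at ht; omega
    rw [mapAlongL_cons, hc, LinearMap.comp_smul, ← mapAlongL_cons, hcirc, smul_zero]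

theorem map_path_eq_bot (τ : ∀ {a b : V}, (a ⟶ b) → Fin (n + 1)) (hZ : IsZnQuiver τ)
    (φ : ∀ {a b : V}, (a ⟶ b) → (W a →ₗ[k] W b)) (hW : IsWeaklyLinkedNetL k τ φ)
    {u v : V} (huv : u ≠ v) (L : ∀ x : V, Submodule k (W x))
    (hgen : GenByVertexL k φ v L) (p : Quiver.Path u v) :
    (L u).map (mapAlongL φ p) = ⊥ := by
  have hp : p.length ≠ 0 := by
    cases p with
    | nil => exact absurd rfl huv
    | cons q e => simp [Quiver.Path.length]
  rw [hgen u, Submodule.map_iSup]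
  refine iSup_eq_bot.mpr fun q => ?_
  rw [← Submodule.map_comp, ← mapAlongL_comp,
    loop_map_zero τ hZ φ hW (q.comp p) (by rw [Quiver.Path.length_comp]; omega),
    Submodule.map_zero]

end Aux

/-- Let `𝔳` be a pure nontrivial finitely generated weakly linked
net of finite-dimensional `k`-vector spaces over a `ℤⁿ`-quiver `Q`. Let
`W ∈ LP(𝔳)` be generated by a vertex `v₀`. Then `φ^u_{v₀}(W_u) = 0` for every
vertex `u` distinct from `v₀`. In particular, for distinct vertices `u` and
`v`, no element of `LP(𝔳)` is generated both by `u` and by `v`. -/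
theorem statement_8
    {k : Type*} [Field k] {V : Type*} [Quiver.{w+1} V] {n : ℕ}
    {W : V → Type*} [∀ v, AddCommGroup (W v)] [∀ v, Module k (W v)]
    [∀ v, FiniteDimensional k (W v)]
    (τ : ∀ {a b : V}, (a ⟶ b) → Fin (n + 1)) (hZ : IsZnQuiver τ)
    (φ : ∀ {a b : V}, (a ⟶ b) → (W a →ₗ[k] W b))
    (hW : IsWeaklyLinkedNetL k τ φ) (hpure : PureNontrivialL k (W := W))
    (hfg : FinGenL k φ)
    (v₀ : V) (L : ∀ v : V, Submodule k (W v)) (hL : IsLP k φ L)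
    (hgen : GenByVertexL k φ v₀ L) :
    (∀ u : V, u ≠ v₀ → ∀ p : Quiver.Path u v₀, Admissible τ p →
      (L u).map (mapAlongL φ p) = ⊥) ∧
    (∀ u v : V, u ≠ v → ∀ L' : ∀ x : V, Submodule k (W x), IsLP k φ L' →
      GenByVertexL k φ u L' → GenByVertexL k φ v L' → False) := by
  constructor
  · intro u hu p _
    exact map_path_eq_bot τ hZ φ hW hu L hgen p
  · intro u v huv L' hL' hgu hgv
    have hbot : L' v = ⊥ := by
      rw [hgu v]
      exact iSup_eq_bot.mpr fun p => map_path_eq_bot τ hZ φ hW huv L' hgv p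
    have h1 := hL'.1 v
    rw [hbot] at h1
    simp at h1

end LNet
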